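/- Let p be a rational number with p ≠ 0, and α, β ∈ ℂ² linearly independent with α·α = 2/p + 2j (j ∈ ℤ), 2 α·β + 2 α·α = 0, and β·β = 1. Then the rank-2 central charge equals −25 + 24/(k+3) + 6(k+3), where 1/p + j = −1/(k+1) (assuming k+1 ≠ 0 and k+3 ≠ 0). In particular it equals minus the central charge 25 − 24/(k+3) − 6(k+3) of the W₃^{(2)} (Bershadsky–Polyakov) algebra. -/

import Mathlib

noncomputable def dot2 (x y : Fin 2 → ℂ) : ℂ := x 0 * y 0 + x 1 * y 1

noncomputable def crank2 (α β : Fin 2 → ℂ) : ℂ :=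
  2 - 3 * ((4 + dot2 α α * dot2 β β) * dot2 (α - β) (α - β)
      + 4 * dot2 (α - β) (dot2 α α • β - dot2 β β • α)) /
    (dot2 α α * dot2 β β - (dot2 α β) ^ 2)

/-!
Write `A = α·α`, so that `α·β = -A` and `β·β = 1`. For `ξ = aα + bβ` the two conditions on `ξ`
read `b = aA - 1/2` and `aA(A - 1) = 1`, and then `ξ·ξ = a ξ·α + b ξ·β = 1/4 - a`.
The relation between `p`, `j` and `k` says `(k + 1) A = -2`, i.e. `A(A - 1) = 2(k + 3)/(k + 1)²`,
which turns `c = 2 - 12 ξ·ξ = -1 + 12 a` into `-1 + 6(k + 1)²/(k + 3) = -25 + 24/(k + 3) + 6(k + 3)`.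
-/

theorem dot2_comm (x y : Fin 2 → ℂ) : dot2 x y = dot2 y x := by
  simp only [dot2]
  ring

theorem dot2_smul_add_smul_left (a b : ℂ) (x y z : Fin 2 → ℂ) :
    dot2 (a • x + b • y) z = a * dot2 x z + b * dot2 y z := by
  simp only [dot2, Pi.add_apply, Pi.smul_apply, smul_eq_mul]
  ring

theorem dot2_smul_add_smul_right (a b : ℂ) (x y z : Fin 2 → ℂ) :
    dot2 z (a • x + b • y) = a * dot2 z x + b * dot2 z y := by
  rw [dot2_comm, dot2_smul_add_smul_left, dot2_comm x, dot2_comm y]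

theorem dot2_self_mul_sub_one_mul_quarter_sub_eq_one {α β ξ : Fin 2 → ℂ}
    (hab : dot2 α β = -dot2 α α) (hbb : dot2 β β = 1)
    (hξ : ξ ∈ Submodule.span ℂ ({α, β} : Set (Fin 2 → ℂ)))
    (h1 : (1/2 : ℂ) * dot2 α α - dot2 ξ α = 1) (h2 : (1/2 : ℂ) * dot2 β β - dot2 ξ β = 1) :
    dot2 α α * (dot2 α α - 1) * (1/4 - dot2 ξ ξ) = 1 := by
  obtain ⟨a, b, rfl⟩ := Submodule.mem_span_pair.mp hξ
  set A := dot2 α α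
  have hξα : dot2 (a • α + b • β) α = a * A - b * A := by
    rw [dot2_smul_add_smul_left, dot2_comm β, hab]
    ring
  have hξβ : dot2 (a • α + b • β) β = -a * A + b := by
    rw [dot2_smul_add_smul_left, hab, hbb]
    ring
  rw [hξα] at h1
  rw [hξβ, hbb] at h2
  have hb : b = a * A - 1/2 := by linear_combination -h2
  have haA : a * A * (A - 1) = 1 := by linear_combination h1 + A * h2
  have hξξ : dot2 (a • α + b • β) (a • α + b • β) = 1/4 - a := by
    rw [dot2_smul_add_smul_right, hξα, hξβ]
    linear_combination (-a) * haA + (b - a * A - 1/2) * hb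
  rw [hξξ]
  linear_combination haA

theorem add_one_mul_two_div_add_two_mul_eq {p k : ℚ} {j : ℤ} (hk1 : k + 1 ≠ 0)
    (hrel : 1 / p + (j : ℚ) = -1 / (k + 1)) :
    ((k : ℂ) + 1) * (2 / (p : ℂ) + 2 * (j : ℂ)) = -2 := by
  have h : (k + 1) * (2 / p + 2 * (j : ℚ)) = -2 := by
    rw [show 2 / p + 2 * (j : ℚ) = 2 * (1 / p + j) by ring, hrel]
    field_simp
  exact_mod_cast h

theorem central_charge_eq_of_add_one_mul_eq {K A x : ℂ} (hK3 : K + 3 ≠ 0)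
    (hA : (K + 1) * A = -2) (hx : A * (A - 1) * (1/4 - x) = 1) :
    2 - 12 * x = -25 + 24 / (K + 3) + 6 * (K + 3) := by
  have hs : 2 * (K + 3) * (1/4 - x) = (K + 1) ^ 2 := by
    linear_combination (K + 1) ^ 2 * hx - ((K + 1) * A - K - 3) * (1/4 - x) * hA
  field_simp
  linear_combination 6 * hs

theorem case41_central_charge_general (p : ℚ) (j : ℤ) (k : ℚ)
    (hk1 : k + 1 ≠ 0) (hk3 : k + 3 ≠ 0)
    (hrel : 1 / p + (j : ℚ) = -1 / (k + 1))
    (α β : Fin 2 → ℂ)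
    (haa : dot2 α α = 2 / (p : ℂ) + 2 * (j : ℂ))
    (hab : 2 * dot2 α β + 2 * dot2 α α = 0)
    (hbb : dot2 β β = 1) :
    ∀ ξ : Fin 2 → ℂ, ξ ∈ Submodule.span ℂ ({α, β} : Set (Fin 2 → ℂ)) →
      (1/2 : ℂ) * dot2 α α - dot2 ξ α = 1 →
      (1/2 : ℂ) * dot2 β β - dot2 ξ β = 1 →
      2 - 12 * dot2 ξ ξ = -25 + 24 / ((k : ℂ) + 3) + 6 * ((k : ℂ) + 3) ∧
      2 - 12 * dot2 ξ ξ = -(25 - 24 / ((k : ℂ) + 3) - 6 * ((k : ℂ) + 3)) := by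
  intro ξ hξ h1 h2
  have hA : ((k : ℂ) + 1) * dot2 α α = -2 := haa ▸ add_one_mul_two_div_add_two_mul_eq hk1 hrel
  have hnorm := dot2_self_mul_sub_one_mul_quarter_sub_eq_one
    (by linear_combination hab / 2) hbb hξ h1 h2
  have hc := central_charge_eq_of_add_one_mul_eq (by exact_mod_cast hk3) hA hnorm
  exact ⟨hc, by rw [hc]; ring⟩

theorem case41_central_charge (p : ℚ) (hp : p ≠ 0) (j : ℤ) (k : ℚ)
    (hk1 : k + 1 ≠ 0) (hk3 : k + 3 ≠ 0)
    (hrel : 1 / p + (j : ℚ) = -1 / (k + 1))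
    (α β : Fin 2 → ℂ) (hlin : LinearIndependent ℂ ![α, β])
    (haa : dot2 α α = 2 / (p : ℂ) + 2 * (j : ℂ))
    (hab : 2 * dot2 α β + 2 * dot2 α α = 0)
    (hbb : dot2 β β = 1) :
    ∀ ξ : Fin 2 → ℂ, ξ ∈ Submodule.span ℂ ({α, β} : Set (Fin 2 → ℂ)) →
      (1/2 : ℂ) * dot2 α α - dot2 ξ α = 1 →
      (1/2 : ℂ) * dot2 β β - dot2 ξ β = 1 →
      2 - 12 * dot2 ξ ξ = -25 + 24 / ((k : ℂ) + 3) + 6 * ((k : ℂ) + 3) ∧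
      2 - 12 * dot2 ξ ξ = -(25 - 24 / ((k : ℂ) + 3) - 6 * ((k : ℂ) + 3)) :=
  case41_central_charge_general p j k hk1 hk3 hrel α β haa hab hbb
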